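/- arXiv:2411.12971 — 4 statements merged into one kernel-verified Lean document; each statement's English description precedes it below -/
import Mathlib

section
/- For every real number u > 0, one has ∫₀¹ t^{-3/2} e^{-t/4 - u²/(4t)} dt ≥ (4/u) e^{-1/4 - (u+2)²/4}. -/
/-! On `[a, 1]` with `a = (u / (u + 2))²` the exponent satisfies
`-t/4 - u²/(4t) ≥ -1/4 - (u+2)²/4`, so the integral is at least
`e^{-1/4 - (u+2)²/4} ∫ₐ¹ t^{-3/2} dt`, and this last integral is `2 (a^{-1/2} - 1) = 4/u`. -/

open Real MeasureTheory Set

lemma Real.exp_neg_le_factorial_div_pow {x : ℝ} (hx : 0 < x) (n : ℕ) :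
    exp (-x) ≤ n.factorial / x ^ n := by
  rw [exp_neg, ← inv_div]
  exact inv_anti₀ (by positivity) (Real.pow_div_factorial_le_exp _ hx.le n)

lemma integral_Ioo_sq_rpow_neg_three_halves {a b : ℝ} (ha : 0 < a) (hab : a ≤ b) :
    ∫ t in Ioo (a ^ 2) (b ^ 2), t ^ (-(3 : ℝ) / 2) = 2 * (a⁻¹ - b⁻¹) := by
  have hb : 0 < b := ha.trans_le hab
  have hsq : ∀ c : ℝ, 0 < c → (c ^ 2) ^ (-(3 : ℝ) / 2 + 1) = c⁻¹ := fun c hc => by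
    rw [← rpow_natCast, ← rpow_mul hc.le]
    norm_num [rpow_neg_one]
  have hzero : (0 : ℝ) ∉ uIcc (a ^ 2) (b ^ 2) := by
    rw [uIcc_of_le (by gcongr)]
    exact fun h => (pow_pos ha 2).not_ge h.1
  rw [← integral_Ioc_eq_integral_Ioo, ← intervalIntegral.integral_of_le (by gcongr),
    integral_rpow (Or.inr ⟨by norm_num, hzero⟩), hsq a ha, hsq b hb]
  ring

lemma integrableOn_Ioo_rpow_of_pos {a b : ℝ} (r : ℝ) (ha : 0 < a) :
    IntegrableOn (fun t : ℝ => t ^ r) (Ioo a b) :=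
  (ContinuousOn.rpow_const continuousOn_id fun _ ht => Or.inl (ha.trans_le ht.1).ne')
    |>.integrableOn_Icc.mono_set Ioo_subset_Icc_self

section HeatIntegrand

/-- The integrand of `G̃(u) = ∫₀¹ t^{-3/2} e^{-t/4 - u²/(4t)} dt`. -/
noncomputable def heatIntegrand (u t : ℝ) : ℝ :=
  t ^ (-(3 : ℝ) / 2) * exp (-t / 4 - u ^ 2 / (4 * t))

variable {u : ℝ}

lemma heatIntegrand_nonneg {t : ℝ} (ht : 0 < t) : 0 ≤ heatIntegrand u t := by
  unfold heatIntegrand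
  positivity

-- `e^{-u²/(4t)} ≤ 2 (4t/u²)²` beats the singularity `t^{-3/2} ≤ t^{-2}`.
lemma heatIntegrand_le (hu : u ≠ 0) {t : ℝ} (ht₀ : 0 < t) (ht₁ : t ≤ 1) :
    heatIntegrand u t ≤ 32 / u ^ 4 := by
  have hrpow : t ^ (-(3 : ℝ) / 2) ≤ (t ^ 2)⁻¹ := by
    rw [← rpow_natCast, ← rpow_neg ht₀.le]
    exact rpow_le_rpow_of_exponent_ge ht₀ ht₁ (by norm_num)
  have hexp : exp (-t / 4 - u ^ 2 / (4 * t)) ≤ 32 * t ^ 2 / u ^ 4 := calc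
    exp (-t / 4 - u ^ 2 / (4 * t)) ≤ exp (-(u ^ 2 / (4 * t))) := exp_le_exp.mpr (by linarith)
    _ ≤ (2 : ℕ).factorial / (u ^ 2 / (4 * t)) ^ 2 :=
        exp_neg_le_factorial_div_pow (by positivity) 2
    _ = 32 * t ^ 2 / u ^ 4 := by norm_num [Nat.factorial]; field_simp; ring
  calc heatIntegrand u t ≤ (t ^ 2)⁻¹ * (32 * t ^ 2 / u ^ 4) :=
        mul_le_mul hrpow hexp (exp_pos _).le (by positivity)
    _ = 32 / u ^ 4 := by field_simp

lemma integrableOn_heatIntegrand (hu : u ≠ 0) : IntegrableOn (heatIntegrand u) (Ioo 0 1) := by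
  refine Measure.integrableOn_of_bounded (M := 32 / u ^ 4) (by simp)
    (by unfold heatIntegrand; fun_prop) ?_
  refine (ae_restrict_iff' measurableSet_Ioo).mpr (ae_of_all _ fun t ht => ?_)
  rw [norm_of_nonneg (heatIntegrand_nonneg ht.1)]
  exact heatIntegrand_le hu ht.1 ht.2.le

lemma rpow_mul_exp_le_heatIntegrand {a t : ℝ} (ha : 0 < a) (hat : a ≤ t) (ht : t ≤ 1) :
    exp (-1 / 4 - u ^ 2 / (4 * a)) * t ^ (-(3 : ℝ) / 2) ≤ heatIntegrand u t := by
  have hdiv : u ^ 2 / (4 * t) ≤ u ^ 2 / (4 * a) := by gcongr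
  have ht₀ : 0 < t := ha.trans_le hat
  rw [heatIntegrand, mul_comm]
  gcongr

end HeatIntegrand

/-- For every real `u > 0`,
`∫₀¹ t^{-3/2} e^{-t/4 - u²/(4t)} dt ≥ (4/u) e^{-1/4 - (u+2)²/4}`. -/
theorem stmt_1 (u : ℝ) (hu : 0 < u) :
    ∫ t in Set.Ioo (0 : ℝ) 1, t ^ (-(3 : ℝ)/2) * Real.exp (-t/4 - u^2 / (4*t))
      ≥ (4 / u) * Real.exp (-1/4 - (u+2)^2 / 4) := by
  set s := u / (u + 2) with hs
  have hs₀ : 0 < s := by positivity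
  have hs₁ : s ≤ 1 := (div_le_one (by positivity)).mpr (by linarith)
  have hexponent : u ^ 2 / (4 * s ^ 2) = (u + 2) ^ 2 / 4 := by rw [hs]; field_simp
  have hsub : Ioo (s ^ 2) 1 ⊆ Ioo 0 1 := Ioo_subset_Ioo_left (by positivity)
  change _ ≤ ∫ t in Ioo 0 1, heatIntegrand u t
  calc (4 / u) * exp (-1 / 4 - (u + 2) ^ 2 / 4)
      = ∫ t in Ioo (s ^ 2) (1 ^ 2), exp (-1 / 4 - (u + 2) ^ 2 / 4) * t ^ (-(3 : ℝ) / 2) := by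
        rw [integral_const_mul, integral_Ioo_sq_rpow_neg_three_halves hs₀ hs₁, hs]
        field_simp
        ring
    _ ≤ ∫ t in Ioo (s ^ 2) 1, heatIntegrand u t := by
        rw [one_pow]
        refine setIntegral_mono_on ((integrableOn_Ioo_rpow_of_pos _ (by positivity)).const_mul _)
          ((integrableOn_heatIntegrand hu.ne').mono_set hsub) measurableSet_Ioo fun t ht => ?_
        rw [← hexponent]
        exact rpow_mul_exp_le_heatIntegrand (by positivity) ht.1.le ht.2.le
    _ ≤ ∫ t in Ioo 0 1, heatIntegrand u t :=
        setIntegral_mono_set (integrableOn_heatIntegrand hu.ne')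
          ((ae_restrict_iff' measurableSet_Ioo).mpr
            (ae_of_all _ fun _ ht => heatIntegrand_nonneg ht.1))
          (ae_of_all _ hsub)
end

section
/- For every real number t > 0, one has (e^{−t/4}/√t) · Σ_{k=1}^∞ ∫₀^∞ ( sinh²(x/2) / sinh(kx/2) ) e^{−k²x²/(4t)} dx ≤ 2√t. -/
/-!
Since `sinh` is increasing, `sinh²(x/2) / sinh(kx/2) ≤ sinh(x/2)` for `k ≥ 1`. Completing the
square, `sinh(x/2) e^{-a x²}` is `e^{1/(16a)}/2` times the difference of two Gaussians centred at
`±1/(4a)`, so its integral over `(0, ∞)` is `e^{1/(16a)}/2` times a Gaussian integral over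
`[-1/(4a), 1/(4a)]`, which is at most the length of that interval. With `a = k²/(4t)` the `k`-th
term is thus at most `e^{t/4} t / k²`, and `∑ 1/k² = π²/6 < 2`.
-/

open Real MeasureTheory Set

lemma setIntegral_Ioi_comp_add_right {E : Type*} [NormedAddCommGroup E] [NormedSpace ℝ E]
    (f : ℝ → E) (b c : ℝ) : ∫ x in Ioi b, f (x + c) = ∫ y in Ioi (b + c), f y := by
  have h := (measurePreserving_add_right volume c).setIntegral_preimage_emb
    (MeasurableEquiv.addRight c).measurableEmbedding f (Ioi (b + c))
  rwa [preimage_add_const_Ioi, add_sub_cancel_right] at h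

lemma sinh_mul_mul_exp_neg_mul_sq {a : ℝ} (ha : a ≠ 0) (b x : ℝ) :
    sinh (b * x) * exp (-(a * x ^ 2)) =
      exp (b ^ 2 / (4 * a)) / 2 *
        (exp (-(a * (x - b / (2 * a)) ^ 2)) - exp (-(a * (x + b / (2 * a)) ^ 2))) := by
  have h₁ : exp (b ^ 2 / (4 * a)) * exp (-(a * (x - b / (2 * a)) ^ 2))
      = exp (b * x) * exp (-(a * x ^ 2)) := by
    rw [← exp_add, ← exp_add]; congr 1; field_simp; ring
  have h₂ : exp (b ^ 2 / (4 * a)) * exp (-(a * (x + b / (2 * a)) ^ 2))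
      = exp (-(b * x)) * exp (-(a * x ^ 2)) := by
    rw [← exp_add, ← exp_add]; congr 1; field_simp; ring
  rw [sinh_eq]
  linear_combination (h₂ - h₁) / 2

lemma integrable_sinh_mul_mul_exp_neg_mul_sq {a : ℝ} (ha : 0 < a) (b : ℝ) :
    Integrable fun x ↦ sinh (b * x) * exp (-(a * x ^ 2)) := by
  have hg : Integrable fun y ↦ exp (-(a * y ^ 2)) := by
    simpa only [neg_mul] using integrable_exp_neg_mul_sq ha
  simp_rw [sinh_mul_mul_exp_neg_mul_sq ha.ne']
  exact ((hg.comp_sub_right _).sub (hg.comp_add_right _)).const_mul _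

lemma integral_Ioi_sinh_mul_mul_exp_neg_mul_sq {a : ℝ} (ha : 0 < a) (b : ℝ) :
    ∫ x in Ioi 0, sinh (b * x) * exp (-(a * x ^ 2)) =
      exp (b ^ 2 / (4 * a)) / 2 * ∫ y in -(b / (2 * a))..b / (2 * a), exp (-(a * y ^ 2)) := by
  have hg : Integrable fun y ↦ exp (-(a * y ^ 2)) := by
    simpa only [neg_mul] using integrable_exp_neg_mul_sq ha
  have hshift (c : ℝ) :
      ∫ x in Ioi 0, exp (-(a * (x + c) ^ 2)) = ∫ y in Ioi c, exp (-(a * y ^ 2)) := by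
    simpa only [zero_add] using setIntegral_Ioi_comp_add_right (fun y ↦ exp (-(a * y ^ 2))) 0 c
  simp_rw [sinh_mul_mul_exp_neg_mul_sq ha.ne']
  rw [integral_const_mul, integral_sub (hg.comp_sub_right _).integrableOn
    (hg.comp_add_right _).integrableOn, hshift]
  simp_rw [sub_eq_add_neg _ (b / (2 * a))]
  rw [hshift, intervalIntegral.integral_Ioi_sub_Ioi' hg.integrableOn hg.integrableOn]

lemma integral_Ioi_sinh_mul_mul_exp_neg_mul_sq_le {a : ℝ} (ha : 0 < a) {b : ℝ} (hb : 0 ≤ b) :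
    ∫ x in Ioi 0, sinh (b * x) * exp (-(a * x ^ 2)) ≤ b / (2 * a) * exp (b ^ 2 / (4 * a)) := by
  set c := b / (2 * a)
  have hc : -c ≤ c := neg_le_self (by positivity)
  have hgauss : ∫ y in -c..c, exp (-(a * y ^ 2)) ≤ ∫ _ in -c..c, (1 : ℝ) :=
    intervalIntegral.integral_mono_on hc (Continuous.intervalIntegrable (by fun_prop) _ _)
      (by simp) fun y _ ↦ exp_le_one_iff.mpr (neg_nonpos.mpr (by positivity))
  rw [integral_Ioi_sinh_mul_mul_exp_neg_mul_sq ha]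
  calc exp (b ^ 2 / (4 * a)) / 2 * ∫ y in -c..c, exp (-(a * y ^ 2))
      ≤ exp (b ^ 2 / (4 * a)) / 2 * ∫ _ in -c..c, (1 : ℝ) := by gcongr
    _ = c * exp (b ^ 2 / (4 * a)) := by
      simp only [intervalIntegral.integral_const, sub_neg_eq_add, smul_eq_mul, mul_one]; ring

lemma sinh_sq_div_sinh_mul_le {y k : ℝ} (hy : 0 ≤ y) (hk : 1 ≤ k) :
    sinh y ^ 2 / sinh (k * y) ≤ sinh y := by
  have hsinh : 0 ≤ sinh y := sinh_nonneg_iff.mpr hy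
  have hle : sinh y ≤ sinh (k * y) := sinh_le_sinh.mpr (le_mul_of_one_le_left hy hk)
  exact div_le_of_le_mul₀ (hsinh.trans hle) hsinh (by nlinarith)

noncomputable def heatTraceIntegrand (t k x : ℝ) : ℝ :=
  sinh (x / 2) ^ 2 / sinh (k * x / 2) * exp (-(k ^ 2 * x ^ 2) / (4 * t))

lemma heatTraceIntegrand_nonneg (t : ℝ) {k x : ℝ} (hk : 0 ≤ k) (hx : 0 ≤ x) :
    0 ≤ heatTraceIntegrand t k x :=
  mul_nonneg (div_nonneg (sq_nonneg _) (sinh_nonneg_iff.mpr (by positivity))) (exp_pos _).le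

lemma heatTraceIntegrand_le {t k x : ℝ} (hk : 1 ≤ k) (hx : 0 ≤ x) :
    heatTraceIntegrand t k x ≤ sinh (1 / 2 * x) * exp (-(k ^ 2 / (4 * t) * x ^ 2)) := by
  rw [heatTraceIntegrand, mul_div_assoc, one_div_mul_eq_div,
    show -(k ^ 2 * x ^ 2) / (4 * t) = -(k ^ 2 / (4 * t) * x ^ 2) by ring]
  exact mul_le_mul_of_nonneg_right (sinh_sq_div_sinh_mul_le (by positivity) hk) (exp_pos _).le

lemma integral_heatTraceIntegrand_le {t k : ℝ} (ht : 0 < t) (hk : 1 ≤ k) :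
    ∫ x in Ioi 0, heatTraceIntegrand t k x ≤ exp (t / 4) * t * (1 / k ^ 2) := by
  have ha : 0 < k ^ 2 / (4 * t) := by positivity
  have hk2 : 1 ≤ k ^ 2 := one_le_pow₀ hk
  calc ∫ x in Ioi 0, heatTraceIntegrand t k x
      ≤ ∫ x in Ioi 0, sinh (1 / 2 * x) * exp (-(k ^ 2 / (4 * t) * x ^ 2)) := by
        refine integral_mono_of_nonneg ?_
          (integrable_sinh_mul_mul_exp_neg_mul_sq ha _).integrableOn ?_
        all_goals filter_upwards [self_mem_ae_restrict measurableSet_Ioi] with x hx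
        exacts [heatTraceIntegrand_nonneg t (by linarith) hx.out.le,
          heatTraceIntegrand_le hk hx.out.le]
    _ ≤ 1 / 2 / (2 * (k ^ 2 / (4 * t))) * exp ((1 / 2) ^ 2 / (4 * (k ^ 2 / (4 * t)))) :=
        integral_Ioi_sinh_mul_mul_exp_neg_mul_sq_le ha (by norm_num)
    _ = exp (t / 4 / k ^ 2) * t * (1 / k ^ 2) := by
        field_simp
        ring_nf
    _ ≤ exp (t / 4) * t * (1 / k ^ 2) := by
        gcongr ?_ * _ * _
        exact exp_le_exp.mpr (div_le_self (by positivity) hk2)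

lemma hasSum_one_div_pnat_sq : HasSum (fun k : ℕ+ ↦ 1 / (k : ℝ) ^ 2) (π ^ 2 / 6) :=
  hasSum_pnat_iff (f := fun n : ℕ ↦ 1 / (n : ℝ) ^ 2).mpr (by simpa using hasSum_zeta_two)

/-- For every real `t > 0`,
`(e^{−t/4}/√t) · Σ_{k=1}^∞ ∫₀^∞ (sinh²(x/2)/sinh(kx/2)) e^{−k²x²/(4t)} dx ≤ 2√t`. -/
theorem stmt_10 (t : ℝ) (ht : 0 < t) :
    (Real.exp (-t/4) / Real.sqrt t) *
        ∑' k : ℕ+, ∫ x in Set.Ioi (0 : ℝ),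
          (Real.sinh (x/2) ^ 2 / Real.sinh ((k : ℝ) * x / 2)) *
            Real.exp (-((k : ℝ)^2 * x^2) / (4*t))
      ≤ 2 * Real.sqrt t := by
  change exp (-t / 4) / √t * ∑' k : ℕ+, ∫ x in Ioi 0, heatTraceIntegrand t k x ≤ 2 * √t
  have hbound := hasSum_one_div_pnat_sq.mul_left (exp (t / 4) * t)
  have hterm (k : ℕ+) :
      ∫ x in Ioi 0, heatTraceIntegrand t k x ≤ exp (t / 4) * t * (1 / (k : ℝ) ^ 2) :=
    integral_heatTraceIntegrand_le ht (by exact_mod_cast (one_le : 1 ≤ k))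
  have hsummable : Summable fun k : ℕ+ ↦ ∫ x in Ioi 0, heatTraceIntegrand t k x :=
    hbound.summable.of_nonneg_of_le (fun k ↦ setIntegral_nonneg measurableSet_Ioi
      fun x hx ↦ heatTraceIntegrand_nonneg t (by positivity) hx.out.le) hterm
  have hsum : ∑' k : ℕ+, ∫ x in Ioi 0, heatTraceIntegrand t k x ≤ exp (t / 4) * t * 2 :=
    (hasSum_le hterm hsummable.hasSum hbound).trans
      (by gcongr; nlinarith [pi_lt_d2, pi_pos])
  calc exp (-t / 4) / √t * ∑' k : ℕ+, ∫ x in Ioi 0, heatTraceIntegrand t k x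
      ≤ exp (-t / 4) / √t * (exp (t / 4) * t * 2) := by gcongr
    _ = 2 * √t := by
        rw [neg_div, exp_neg]
        field_simp
        rw [sq_sqrt ht.le]
end

section
/- There is a universal constant C > 0 such that for every real number R ≥ 1 and every integer L ≥ 4R + 1, one has Σ_{k=L}^∞ ( e^{k} / (2 sinh(k/2)) ) e^{−k²/(4R)} ≤ C √R · e^{−2R}. -/
/-!
For `k ≥ L ≥ 4R + 1` one has `k² / (4R) ≥ k`, and `e^k / (2 sinh (k/2)) = e^{k/2} / (1 - e^{-k})
≤ e^{k/2} / (1 - e^{-1})`, so the `k`-th term is at most `e^{-k/2} / (1 - e^{-1})`. The tail of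
this geometric series is a constant times `e^{-L/2} ≤ e^{-2R} ≤ √R e^{-2R}`.
-/

open Real

noncomputable def longGeodesicTerm (R k : ℝ) : ℝ :=
  exp k / (2 * sinh (k / 2)) * exp (-k ^ 2 / (4 * R))

lemma one_sub_exp_pos {x : ℝ} (hx : x < 0) : 0 < 1 - exp x :=
  sub_pos.mpr (exp_lt_one_iff.mpr hx)

lemma two_mul_sinh_half (x : ℝ) : 2 * sinh (x / 2) = exp (x / 2) * (1 - exp (-x)) := by
  rw [sinh_eq, mul_sub, ← exp_add]
  ring_nf

lemma exp_div_two_mul_sinh_half_le {x : ℝ} (hx : 1 ≤ x) :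
    exp x / (2 * sinh (x / 2)) ≤ (1 - exp (-1))⁻¹ * exp (x / 2) := by
  have h_one_sub_pos : 0 < 1 - exp (-1) := one_sub_exp_pos (by norm_num)
  have h_one_sub_le : 1 - exp (-1) ≤ 1 - exp (-x) := by
    linarith [exp_le_exp.mpr (neg_le_neg hx)]
  have h_eq : exp x / (2 * sinh (x / 2)) = exp (x / 2) / (1 - exp (-x)) := by
    rw [two_mul_sinh_half, div_mul_eq_div_div, ← exp_sub]
    ring_nf
  rw [h_eq, div_eq_mul_inv, mul_comm]
  gcongr

lemma longGeodesicTerm_nonneg (R : ℝ) {x : ℝ} (hx : 0 ≤ x) : 0 ≤ longGeodesicTerm R x := by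
  have : 0 ≤ sinh (x / 2) := sinh_nonneg_iff.mpr (by linarith)
  unfold longGeodesicTerm
  positivity

lemma longGeodesicTerm_le {R x : ℝ} (hR : 0 < R) (hx₁ : 1 ≤ x) (hxR : 4 * R ≤ x) :
    longGeodesicTerm R x ≤ (1 - exp (-1))⁻¹ * exp (-x / 2) := by
  have h_gauss : exp (-x ^ 2 / (4 * R)) ≤ exp (-x) := by
    rw [exp_le_exp, div_le_iff₀ (by positivity)]
    nlinarith
  calc longGeodesicTerm R x
      ≤ (1 - exp (-1))⁻¹ * exp (x / 2) * exp (-x) := by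
        unfold longGeodesicTerm
        exact mul_le_mul (exp_div_two_mul_sinh_half_le hx₁) h_gauss (exp_pos _).le
          (mul_nonneg (inv_nonneg.mpr (one_sub_exp_pos (by norm_num)).le) (exp_pos _).le)
    _ = (1 - exp (-1))⁻¹ * exp (-x / 2) := by
        rw [mul_assoc, ← exp_add]
        ring_nf

lemma hasSum_exp_neg_add_div_two (a : ℝ) :
    HasSum (fun n : ℕ => exp (-(a + n) / 2)) (exp (-a / 2) / (1 - exp (-1 / 2))) := by
  have h_ratio : exp (-1 / 2) < 1 := exp_lt_one_iff.mpr (by norm_num)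
  have h_terms : (fun n : ℕ => exp (-(a + n) / 2)) = fun n => exp (-a / 2) * exp (-1 / 2) ^ n := by
    ext n
    rw [← exp_nat_mul, ← exp_add]
    ring_nf
  rw [h_terms, div_eq_mul_inv]
  exact (hasSum_geometric_of_lt_one (exp_pos _).le h_ratio).mul_left _

lemma tsum_longGeodesicTerm_le {R a : ℝ} (hR : 0 < R) (ha₁ : 1 ≤ a) (haR : 4 * R ≤ a) :
    ∑' n : ℕ, longGeodesicTerm R (a + n)
      ≤ (1 - exp (-1))⁻¹ * (exp (-a / 2) / (1 - exp (-1 / 2))) := by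
  have h_term (n : ℕ) :
      longGeodesicTerm R (a + n) ≤ (1 - exp (-1))⁻¹ * exp (-(a + n) / 2) :=
    longGeodesicTerm_le hR (by linarith [n.cast_nonneg (α := ℝ)])
      (by linarith [n.cast_nonneg (α := ℝ)])
  have h_major := (hasSum_exp_neg_add_div_two a).mul_left (1 - exp (-1))⁻¹
  have h_summable : Summable (fun n : ℕ => longGeodesicTerm R (a + n)) :=
    h_major.summable.of_nonneg_of_le
      (fun n => longGeodesicTerm_nonneg R (by linarith [n.cast_nonneg (α := ℝ)])) h_term
  exact hasSum_le h_term h_summable.hasSum h_major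

/-- There is a universal constant `C > 0` such that for every real `R ≥ 1` and
every integer `L ≥ 4R + 1`,
`Σ_{k=L}^∞ (e^{k}/(2 sinh(k/2))) e^{−k²/(4R)} ≤ C √R · e^{−2R}`. -/
theorem stmt_14 :
    ∃ C : ℝ, 0 < C ∧ ∀ R : ℝ, 1 ≤ R → ∀ L : ℕ, 4*R + 1 ≤ (L : ℝ) →
      ∑' n : ℕ, (Real.exp ((L + n : ℕ) : ℝ) / (2 * Real.sinh (((L + n : ℕ) : ℝ)/2))) *
          Real.exp (-((L + n : ℕ) : ℝ)^2 / (4*R))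
        ≤ C * Real.sqrt R * Real.exp (-2*R) := by
  have h_pos : 0 < 1 - exp (-1) := one_sub_exp_pos (by norm_num)
  have h_pos' : 0 < 1 - exp (-1 / 2) := one_sub_exp_pos (by norm_num)
  refine ⟨(1 - exp (-1))⁻¹ / (1 - exp (-1 / 2)), by positivity, fun R hR L hL => ?_⟩
  have h_decay : exp (-(L : ℝ) / 2) ≤ sqrt R * exp (-2 * R) := by
    calc exp (-(L : ℝ) / 2) ≤ exp (-2 * R) := exp_le_exp.mpr (by linarith)
      _ ≤ sqrt R * exp (-2 * R) :=
        le_mul_of_one_le_left (exp_pos _).le (one_le_sqrt.mpr hR)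
  calc _ = ∑' n : ℕ, longGeodesicTerm R (L + n) := by push_cast; rfl
    _ ≤ (1 - exp (-1))⁻¹ * (exp (-(L : ℝ) / 2) / (1 - exp (-1 / 2))) :=
        tsum_longGeodesicTerm_le (by linarith) (by linarith) (by linarith)
    _ ≤ (1 - exp (-1))⁻¹ * (sqrt R * exp (-2 * R) / (1 - exp (-1 / 2))) := by gcongr
    _ = _ := by ring
end

section
/- There is a universal constant C > 0 with the following property. Let R ≥ 1 be real, let L be an integer with L ≥ 4R + 1, let N > 0, and let (v_i)_{i∈I} be a countable family of real numbers with v_i ≥ L for all i, such that for every integer k ≥ L the number of indices i with k ≤ v_i ≤ k + 1 is at most N e^{k}. Then Σ_{i∈I} e^{−v_i²/(4R)} / (2 sinh(v_i/2)) ≤ C N √R · e^{−2R}. -/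
/-!
Bin the `v i` into the unit intervals `[L + j, L + j + 1)`. The summand is decreasing in `v`, so
each bin contributes at most `N e^{L+j}` times the summand at `L + j`. Since
`e^x / (2 sinh (x/2)) ≤ 2 e^{x/2}` and, for `x ≥ L ≥ 4R`, `x/2 - x²/(4R) ≤ -2R - (x - L)`, the
`j`-th bin contributes at most `2 N e^{-2R} e^{-j}`; summing the geometric series gives
`4 N e^{-2R} ≤ 4 N √R e^{-2R}`.
-/

open Real

theorem tsum_le_tsum_of_sum_fiber_le {ι : Type*} {f : ι → ℝ} (k : ι → ℕ)
    {b : ℕ → ℝ} (hb : Summable b)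
    (hfiber : ∀ m (s : Finset ι), (∀ i ∈ s, k i = m) → ∑ i ∈ s, f i ≤ b m) :
    ∑' i, f i ≤ ∑' m, b m := by
  classical
  have hb0 : ∀ m, 0 ≤ b m := fun m => by simpa using hfiber m ∅ (by simp)
  refine tsum_le_of_sum_le' (tsum_nonneg hb0) fun s => ?_
  rw [← Finset.sum_fiberwise_of_maps_to fun i hi => Finset.mem_image_of_mem k hi]
  calc ∑ m ∈ s.image k, ∑ i ∈ s with k i = m, f i
      ≤ ∑ m ∈ s.image k, b m :=
        Finset.sum_le_sum fun m _ => hfiber m _ fun i hi => (Finset.mem_filter.1 hi).2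
    _ ≤ ∑' m, b m := hb.sum_le_tsum _ fun m _ => hb0 m

open Set in
theorem tsum_comp_le_of_count_le {ι : Type*} {v : ι → ℝ} {g : ℝ → ℝ} {L : ℕ} {c : ℕ → ℝ}
    (hv : ∀ i, (L : ℝ) ≤ v i) (hg0 : ∀ x, (L : ℝ) ≤ x → 0 ≤ g x) (hg : AntitoneOn g (Ici (L : ℝ)))
    (hcount : ∀ k : ℕ, L ≤ k → {i | (k : ℝ) ≤ v i ∧ v i ≤ k + 1}.Finite ∧
      ({i | (k : ℝ) ≤ v i ∧ v i ≤ k + 1}.ncard : ℝ) ≤ c k)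
    (hsum : Summable fun j : ℕ => c (L + j) * g (L + j : ℕ)) :
    ∑' i, g (v i) ≤ ∑' j : ℕ, c (L + j) * g (L + j : ℕ) := by
  refine tsum_le_tsum_of_sum_fiber_le (fun i => ⌊v i⌋₊ - L) hsum
    fun j s hs => ?_
  have hbin : ∀ i ∈ s, ((L + j : ℕ) : ℝ) ≤ v i ∧ v i < (L + j : ℕ) + 1 := fun i hi => by
    have hL : L ≤ ⌊v i⌋₊ := Nat.le_floor (hv i)
    have hfloor : ⌊v i⌋₊ = L + j := by have := hs i hi; omega
    exact (Nat.floor_eq_iff ((Nat.cast_nonneg L).trans (hv i))).1 hfloor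
  obtain ⟨hfin, hcard⟩ := hcount (L + j) (Nat.le_add_right L j)
  have hs_card : (s.card : ℝ) ≤ c (L + j) := by
    refine le_trans ?_ hcard
    rw [← Set.ncard_coe_finset]
    have hsub : (s : Set ι) ⊆ {i | ((L + j : ℕ) : ℝ) ≤ v i ∧ v i ≤ (L + j : ℕ) + 1} :=
      fun i hi => ⟨(hbin i hi).1, (hbin i hi).2.le⟩
    exact_mod_cast Set.ncard_le_ncard hsub hfin
  have hLj : (L : ℝ) ≤ (L + j : ℕ) := by exact_mod_cast Nat.le_add_right L j
  calc ∑ i ∈ s, g (v i) ≤ s.card • g (L + j : ℕ) :=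
        Finset.sum_le_card_nsmul _ _ _ fun i hi =>
          hg hLj ((hLj.trans (hbin i hi).1)) (hbin i hi).1
    _ ≤ c (L + j) * g (L + j : ℕ) := by
        rw [nsmul_eq_mul]; exact mul_le_mul_of_nonneg_right hs_card (hg0 _ hLj)

theorem exp_div_two_sinh_half_le {x : ℝ} (hx : 1 ≤ x) :
    exp x / (2 * sinh (x / 2)) ≤ 2 * exp (x / 2) := by
  have hsinh : 0 < sinh (x / 2) := sinh_pos_iff.2 (by linarith)
  have h2 : 2 ≤ exp x := by linarith [add_one_le_exp x]
  have hsq : exp (x / 2) * exp (x / 2) = exp x := by rw [← exp_add, add_halves]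
  have hinv : exp (x / 2) * exp (-(x / 2)) = 1 := by rw [← exp_add, add_neg_cancel, exp_zero]
  rw [div_le_iff₀ (by positivity), sinh_eq]
  nlinarith

theorem half_sub_sq_div_le {R L x : ℝ} (hR : 0 < R) (hL : 4 * R ≤ L) (hx : L ≤ x) :
    x / 2 - x ^ 2 / (4 * R) ≤ -2 * R - (x - L) := by
  rw [div_sub_div _ _ two_ne_zero (by positivity), div_le_iff₀ (by positivity)]
  nlinarith [mul_nonneg (sub_nonneg.2 hx) (by linarith : 0 ≤ x + L - 6 * R),
    mul_nonneg (sub_nonneg.2 hL) (by linarith : 0 ≤ L + 2 * R)]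

theorem tsum_exp_neg_nat_le_two : ∑' j : ℕ, exp (-j) ≤ 2 := by
  have hr1 : exp (-1) < 1 := exp_lt_one_iff.2 neg_one_lt_zero
  have hr2 : exp (-1) ≤ 1 / 2 := by
    rw [exp_neg, inv_le_comm₀ (exp_pos 1) (by norm_num)]
    linarith [add_one_le_exp (1 : ℝ)]
  have hgeom : (fun j : ℕ => exp (-j)) = fun j => exp (-1) ^ j :=
    funext fun j => by rw [← exp_nat_mul, mul_neg_one]
  rw [hgeom, tsum_geometric_of_lt_one (exp_nonneg _) hr1, inv_le_comm₀ (by linarith) two_pos]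
  linarith

section SinhGaussWeight

variable {R : ℝ}

noncomputable def sinhGaussWeight (R x : ℝ) : ℝ := exp (-x ^ 2 / (4 * R)) / (2 * sinh (x / 2))

theorem sinhGaussWeight_pos {x : ℝ} (hx : 0 < x) : 0 < sinhGaussWeight R x := by
  have := sinh_pos_iff.2 (half_pos hx)
  unfold sinhGaussWeight; positivity

theorem sinhGaussWeight_antitoneOn (hR : 0 < R) : AntitoneOn (sinhGaussWeight R) (Set.Ioi 0) := by
  intro x hx y _ hxy
  have hx2 : 0 < sinh (x / 2) := sinh_pos_iff.2 (half_pos hx)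
  refine div_le_div₀ (exp_nonneg _) (exp_le_exp.2 ?_) (by positivity) ?_
  · gcongr
    exact hx.le
  · gcongr
    exact sinh_le_sinh.2 (by linarith)

theorem exp_mul_sinhGaussWeight_le (hR : 0 < R) {L x : ℝ} (hL : 4 * R ≤ L) (hx : L ≤ x)
    (hx1 : 1 ≤ x) : exp x * sinhGaussWeight R x ≤ 2 * exp (-2 * R) * exp (-(x - L)) :=
  calc exp x * sinhGaussWeight R x
      = exp x / (2 * sinh (x / 2)) * exp (-x ^ 2 / (4 * R)) := by
        unfold sinhGaussWeight; ring
    _ ≤ 2 * exp (x / 2) * exp (-x ^ 2 / (4 * R)) := by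
        gcongr; exact exp_div_two_sinh_half_le hx1
    _ = 2 * exp (x / 2 - x ^ 2 / (4 * R)) := by
        rw [mul_assoc, ← exp_add, neg_div, ← sub_eq_add_neg]
    _ ≤ 2 * exp (-2 * R) * exp (-(x - L)) := by
        rw [mul_assoc, ← exp_add]
        gcongr
        linarith [half_sub_sq_div_le hR hL hx]

theorem exp_mul_sinhGaussWeight_natCast_add_le (hR : 0 < R) {L : ℕ} (hL : 4 * R + 1 ≤ L)
    (j : ℕ) :
    exp (L + j : ℕ) * sinhGaussWeight R (L + j : ℕ) ≤ 2 * exp (-2 * R) * exp (-j) := by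
  have hLj : (L : ℝ) ≤ (L + j : ℕ) := by exact_mod_cast Nat.le_add_right L j
  have := exp_mul_sinhGaussWeight_le hR (by linarith) hLj (by linarith)
  rw [Nat.cast_add, add_sub_cancel_left] at this
  rwa [Nat.cast_add]

end SinhGaussWeight

/-- There is a universal constant `C > 0` with the following property. Let `R ≥ 1`
be real, let `L` be an integer with `L ≥ 4R + 1`, let `N > 0`, and let `(v i)` be a
countable family of reals with `v i ≥ L` for all `i`, such that for every integer
`k ≥ L` the number of indices `i` with `k ≤ v i ≤ k + 1` is at most `N e^k`. Then
`Σ_i e^{−(v i)²/(4R)} / (2 sinh(v i / 2)) ≤ C N √R · e^{−2R}`. -/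
theorem stmt_15 :
    ∃ C : ℝ, 0 < C ∧ ∀ (R : ℝ), 1 ≤ R → ∀ (L : ℕ), 4*R + 1 ≤ (L : ℝ) →
      ∀ (N : ℝ), 0 < N → ∀ (I : Type) (_ : Countable I) (v : I → ℝ),
        (∀ i, (L : ℝ) ≤ v i) →
        (∀ k : ℕ, L ≤ k →
          ({i : I | (k : ℝ) ≤ v i ∧ v i ≤ (k : ℝ) + 1}).Finite ∧
          (({i : I | (k : ℝ) ≤ v i ∧ v i ≤ (k : ℝ) + 1}).ncard : ℝ) ≤ N * Real.exp k) →
        ∑' i : I, Real.exp (-(v i)^2 / (4*R)) / (2 * Real.sinh (v i / 2))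
          ≤ C * N * Real.sqrt R * Real.exp (-2*R) := by
  refine ⟨4, four_pos, fun R hR L hL N hN I _ v hv hcount => ?_⟩
  have hR0 : 0 < R := by linarith
  have hL0 : 0 < (L : ℝ) := by linarith
  have hbin : ∀ j : ℕ, N * exp (L + j : ℕ) * sinhGaussWeight R (L + j : ℕ)
      ≤ 2 * N * exp (-2 * R) * exp (-j) := fun j => by
    have := mul_le_mul_of_nonneg_left (exp_mul_sinhGaussWeight_natCast_add_le hR0 hL j) hN.le
    linarith
  have hgeom : Summable fun j : ℕ => 2 * N * exp (-2 * R) * exp (-j) :=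
    summable_exp_neg_nat.mul_left _
  have hsum : Summable fun j : ℕ => N * exp (L + j : ℕ) * sinhGaussWeight R (L + j : ℕ) := by
    refine hgeom.of_nonneg_of_le (fun j => mul_nonneg (by positivity) ?_) hbin
    exact (sinhGaussWeight_pos (hL0.trans_le (by exact_mod_cast Nat.le_add_right L j))).le
  calc ∑' i, sinhGaussWeight R (v i)
      ≤ ∑' j : ℕ, N * exp (L + j : ℕ) * sinhGaussWeight R (L + j : ℕ) :=
        tsum_comp_le_of_count_le hv (fun x hx => (sinhGaussWeight_pos (hL0.trans_le hx)).le)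
          ((sinhGaussWeight_antitoneOn hR0).mono fun x hx => hL0.trans_le hx) hcount hsum
    _ ≤ ∑' j : ℕ, 2 * N * exp (-2 * R) * exp (-j) := hsum.tsum_le_tsum hbin hgeom
    _ ≤ 2 * N * exp (-2 * R) * 2 := by
        rw [tsum_mul_left]; gcongr; exact tsum_exp_neg_nat_le_two
    _ ≤ 4 * N * sqrt R * exp (-2 * R) := by
        have : 1 ≤ sqrt R := one_le_sqrt.2 hR
        have : 0 < N * exp (-2 * R) := by positivity
        nlinarith
end
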